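/- For any integer n ≥ 2, the determinant of the n×n matrix R*_n with entries (R*_n)_{ij} = 1 if i ∥ j or j = 1 and 0 otherwise, equals M*(n) = Σ_{k=1}^{n} (-1)^{ω(k)}. -/

import Mathlib

/-!
Let `Z` be the unitary zeta matrix, `Z i j = [i ∥ j]`; then `R*_n` is `Z` with its first column
replaced by the all-ones vector. `Z` is upper unitriangular, and the row vector
`u = (μ*(1), …, μ*(n))` satisfies `u Z = e₁`, because the unitary divisors of `m` correspond to the
subsets `S` of its prime factors, so `∑_{d ∥ m} μ*(d) = ∑_S (-1)^|S| = [m = 1]`. By Cramer's rule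
`det R*_n = det Z · (u ⬝ 𝟙) = ∑_{k ≤ n} μ*(k)`.
-/

/-- `d` is a unitary divisor of `j`: `d ∣ j` and `gcd(d, j/d) = 1`. -/
def UnitaryDvd (d j : ℕ) : Prop := d ∣ j ∧ Nat.Coprime d (j / d)

instance : ∀ d j, Decidable (UnitaryDvd d j) := fun _ _ => instDecidableAnd

/-- The unitary Möbius function `μ*(n) = (-1)^{ω(n)}`. -/
noncomputable def mustar (n : ℕ) : ℤ := (-1) ^ n.primeFactors.card

/-- `M*(x, k) = ∑_{d ≤ x, gcd(d,k)=1} μ*(d)`. -/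
noncomputable def Mstar (x k : ℕ) : ℤ :=
  ∑ d ∈ (Finset.Icc 1 x).filter (fun d => Nat.Coprime d k), mustar d

open Finset Matrix

lemma UnitaryDvd.refl {a : ℕ} (ha : a ≠ 0) : UnitaryDvd a a :=
  ⟨dvd_rfl, by simp [Nat.div_self (Nat.pos_of_ne_zero ha)]⟩

lemma UnitaryDvd.factorization_eq {d m p : ℕ} (h : UnitaryDvd d m)
    (hp : p ∈ d.primeFactors) : d.factorization p = m.factorization p := by
  obtain ⟨hdvd, hcop⟩ := h
  have hp' : (m / d).factorization p = 0 :=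
    Finsupp.notMem_support_iff.1 fun hp' => hcop.disjoint_primeFactors.notMem_of_mem_left_finset hp
      (Nat.support_factorization _ ▸ hp')
  rw [← Nat.mul_div_cancel' hdvd, Nat.factorization_mul_of_coprime hcop]
  simp [hp']

lemma support_filter_factorization_subset (m : ℕ) (S : Finset ℕ) :
    (m.factorization.filter (· ∈ S)).support ⊆ m.primeFactors := by
  rw [Finsupp.support_filter, Nat.support_factorization]
  exact filter_subset _ _

noncomputable def unitaryPart (m : ℕ) (S : Finset ℕ) : ℕ :=
  (m.factorization.filter (· ∈ S)).prod (· ^ ·)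

lemma factorization_unitaryPart (m : ℕ) (S : Finset ℕ) :
    (unitaryPart m S).factorization = m.factorization.filter (· ∈ S) :=
  Nat.prod_pow_factorization_eq_self fun _ hp =>
    Nat.prime_of_mem_primeFactors (support_filter_factorization_subset m S hp)

lemma unitaryPart_ne_zero (m : ℕ) (S : Finset ℕ) : unitaryPart m S ≠ 0 :=
  Finsupp.prod_ne_zero_iff.2 fun _ hp => pow_ne_zero _
    (Nat.prime_of_mem_primeFactors (support_filter_factorization_subset m S hp)).ne_zero

lemma primeFactors_unitaryPart {m : ℕ} {S : Finset ℕ} (hS : S ⊆ m.primeFactors) :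
    (unitaryPart m S).primeFactors = S := by
  rw [← Nat.support_factorization, factorization_unitaryPart, Finsupp.support_filter,
    Nat.support_factorization, filter_mem_eq_inter, inter_eq_right.2 hS]

lemma unitaryDvd_unitaryPart (m : ℕ) (S : Finset ℕ) : UnitaryDvd (unitaryPart m S) m := by
  rcases eq_or_ne m 0 with rfl | hm
  · exact ⟨dvd_zero _, by simp [unitaryPart, Finsupp.filter_zero]⟩
  have hdvd : unitaryPart m S ∣ m := by
    rw [← Nat.factorization_le_iff_dvd (unitaryPart_ne_zero m S) hm, factorization_unitaryPart]
    exact le_self_add.trans_eq (Finsupp.filter_add_filter_not _ _)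
  have hquot : (m / unitaryPart m S).factorization = m.factorization.filter (· ∉ S) := by
    rw [Nat.factorization_div hdvd, factorization_unitaryPart]
    exact tsub_eq_of_eq_add_rev (Finsupp.filter_add_filter_not _ _).symm
  refine ⟨hdvd, (Nat.disjoint_primeFactors (unitaryPart_ne_zero m S)
    (Nat.div_ne_zero_iff_of_dvd hdvd |>.2 ⟨hm, unitaryPart_ne_zero m S⟩)).1 ?_⟩
  rw [← Nat.support_factorization, ← Nat.support_factorization, hquot, factorization_unitaryPart,
    Finsupp.support_filter, Finsupp.support_filter]
  exact disjoint_filter_filter_not _ _ _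

lemma UnitaryDvd.unitaryPart_primeFactors {d m : ℕ} (hm : m ≠ 0) (h : UnitaryDvd d m) :
    unitaryPart m d.primeFactors = d := by
  have hd : d ≠ 0 := by rintro rfl; exact hm (Nat.eq_zero_of_zero_dvd h.1)
  refine Nat.eq_of_factorization_eq (unitaryPart_ne_zero _ _) hd fun p => ?_
  rw [factorization_unitaryPart, Finsupp.filter_apply]
  split_ifs with hp
  · exact (h.factorization_eq hp).symm
  · exact (Finsupp.notMem_support_iff.1 (Nat.support_factorization d ▸ hp)).symm

lemma sum_mustar_unitaryDvd {m : ℕ} (hm : m ≠ 0) :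
    ∑ d ∈ m.divisors.filter (UnitaryDvd · m), mustar d = if m = 1 then 1 else 0 := by
  calc ∑ d ∈ m.divisors.filter (UnitaryDvd · m), mustar d
      = ∑ S ∈ m.primeFactors.powerset, (-1 : ℤ) ^ S.card :=
        sum_nbij' Nat.primeFactors (unitaryPart m)
          (fun d hd => mem_powerset.2 (Nat.primeFactors_mono (mem_filter.1 hd).2.1 hm))
          (fun S _ => mem_filter.2
            ⟨Nat.mem_divisors.2 ⟨(unitaryDvd_unitaryPart m S).1, hm⟩, unitaryDvd_unitaryPart m S⟩)
          (fun d hd => (mem_filter.1 hd).2.unitaryPart_primeFactors hm)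
          (fun S hS => primeFactors_unitaryPart (mem_powerset.1 hS))
          (fun _ _ => rfl)
    _ = if m = 1 then 1 else 0 := by
        simp [sum_powerset_neg_one_pow_card, Nat.primeFactors_eq_empty, hm]

lemma sum_fin_eq_sum_Icc {M : Type*} [AddCommMonoid M] (n : ℕ) (f : ℕ → M) :
    ∑ i : Fin n, f (i + 1) = ∑ k ∈ Icc 1 n, f k := by
  rw [Fin.sum_univ_eq_sum_range (fun i => f (i + 1)), range_eq_Ico, sum_Ico_add' f 0 n 1,
    zero_add, Ico_add_one_right_eq_Icc]

lemma det_updateCol_eq_mul_dotProduct {ι R : Type*} [Fintype ι] [DecidableEq ι] [CommRing R]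
    (A : Matrix ι ι R) (b : ι → R) {i : ι} {u : ι → R} (hu : u ᵥ* A = Pi.single i 1) :
    (A.updateCol i b).det = A.det * (u ⬝ᵥ b) := by
  rw [← cramer_apply, ← single_one_dotProduct i (A.cramer b), ← hu, ← dotProduct_mulVec,
    mulVec_cramer, dotProduct_smul, smul_eq_mul]

def unitaryZeta (n : ℕ) : Matrix (Fin n) (Fin n) ℤ :=
  of fun i j => if UnitaryDvd (i + 1) (j + 1) then 1 else 0

lemma det_unitaryZeta (n : ℕ) : (unitaryZeta n).det = 1 := by
  rw [det_of_isUpperTriangular]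
  · exact prod_eq_one fun i _ => by simp [unitaryZeta, UnitaryDvd.refl (Nat.succ_ne_zero i)]
  · intro i j hji
    have : ¬ UnitaryDvd (i + 1) (j + 1) := fun h =>
      (Nat.le_of_dvd (j : ℕ).succ_pos h.1).not_gt (Nat.succ_lt_succ hji)
    simp [unitaryZeta, this]

lemma vecMul_unitaryZeta (n : ℕ) :
    (fun k : Fin (n + 1) => mustar (k + 1)) ᵥ* unitaryZeta (n + 1) = Pi.single 0 1 := by
  ext j
  have hdiv : (Icc 1 (n + 1)).filter (UnitaryDvd · (j + 1))
      = (j + 1 : ℕ).divisors.filter (UnitaryDvd · (j + 1)) := by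
    ext k
    simp only [mem_filter, mem_Icc, Nat.mem_divisors]
    refine ⟨fun h => ⟨⟨h.2.1, (j : ℕ).succ_ne_zero⟩, h.2⟩, fun ⟨⟨hk, _⟩, hu⟩ => ⟨⟨?_, ?_⟩, hu⟩⟩
    · exact Nat.pos_of_dvd_of_pos hk (j : ℕ).succ_pos
    · exact (Nat.le_of_dvd (j : ℕ).succ_pos hk).trans j.isLt
  calc ((fun k : Fin (n + 1) => mustar (k + 1)) ᵥ* unitaryZeta (n + 1)) j
      = ∑ k ∈ Icc 1 (n + 1), if UnitaryDvd k (j + 1) then mustar k else 0 := by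
        simp only [vecMul, dotProduct, unitaryZeta, of_apply, mul_ite, mul_one, mul_zero]
        exact sum_fin_eq_sum_Icc (n + 1) fun k => if UnitaryDvd k (j + 1) then mustar k else 0
    _ = (Pi.single 0 1 : Fin (n + 1) → ℤ) j := by
        rw [← sum_filter, hdiv, sum_mustar_unitaryDvd (j : ℕ).succ_ne_zero, Pi.single_apply]
        exact if_congr (by rw [Nat.succ_inj, Fin.ext_iff, Fin.val_zero]) rfl rfl

lemma redheffer_eq_updateCol (n : ℕ) :
    (of fun i j : Fin (n + 1) =>
        if UnitaryDvd ((i : ℕ) + 1) ((j : ℕ) + 1) ∨ (j : ℕ) + 1 = 1 then (1 : ℤ) else 0) =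
      (unitaryZeta (n + 1)).updateCol 0 1 := by
  ext i j
  rcases eq_or_ne j 0 with rfl | hj
  · simp
  · simp [unitaryZeta, hj]

theorem det_redheffer_star (n : ℕ) (hn : 2 ≤ n) :
    Matrix.det (Matrix.of fun i j : Fin n =>
        if UnitaryDvd ((i : ℕ) + 1) ((j : ℕ) + 1) ∨ (j : ℕ) + 1 = 1 then (1 : ℤ) else 0) =
      ∑ k ∈ Finset.Icc 1 n, (-1 : ℤ) ^ k.primeFactors.card := by
  obtain ⟨m, rfl⟩ : ∃ m, n = m + 1 := ⟨n - 1, by omega⟩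
  rw [redheffer_eq_updateCol, det_updateCol_eq_mul_dotProduct _ _ (vecMul_unitaryZeta m),
    det_unitaryZeta, one_mul, dotProduct_one]
  exact sum_fin_eq_sum_Icc (m + 1) mustar
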